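/- arXiv:1009.5611 — 3 statements merged into one kernel-verified Lean document; each statement's English description precedes it below -/
import Mathlib

section
/- If |ε_i| ≤ 1/2 for all i, then for every r ≥ 0 and ℓ ≥ 1, |ε_{r,ℓ} - ε̃_{r,ℓ}| ≤ ℓ^2 (3/2)^{ℓ-2} |ε|_∞^2, where |ε|_∞ = sup_i |ε_i|. -/
/-- `ε_{r,ℓ} = (1+ε_{r+1})⋯(1+ε_{r+ℓ-1})(1-ε_{r+ℓ}) - 1` for `ℓ ≥ 1`. -/
noncomputable def epsRL (ε : ℕ → ℝ) (r ℓ : ℕ) : ℝ :=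
  (∏ i ∈ Finset.range (ℓ - 1), (1 + ε (r + i + 1))) * (1 - ε (r + ℓ)) - 1

/-- `ε̃_{r,ℓ} = -ε_{r+ℓ} + ∑_{i=1}^{ℓ-1} ε_{r+i}`. -/
noncomputable def epsTildeRL (ε : ℕ → ℝ) (r ℓ : ℕ) : ℝ :=
  -ε (r + ℓ) + ∑ i ∈ Finset.range (ℓ - 1), ε (r + i + 1)

lemma aux_bound (E : ℝ) (hE : 0 ≤ E) (hE2 : E ≤ 1/2)
    (f : ℕ → ℝ) (h : ∀ i, |f i| ≤ E) (m : ℕ) :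
    |∏ i ∈ Finset.range m, (1 + f i) - 1| ≤ m * E * (3/2)^m ∧
    |∏ i ∈ Finset.range m, (1 + f i) - 1 - ∑ i ∈ Finset.range m, f i|
      ≤ (m : ℝ)^2 * (3/2)^(m-1) * E^2 := by
  induction m with
  | zero => simp
  | succ n ih =>
    obtain ⟨ih1, ih2⟩ := ih
    have hpown : (1:ℝ) ≤ (3/2:ℝ)^n := one_le_pow₀ (by norm_num)
    have hpown1 : (1:ℝ) ≤ (3/2:ℝ)^(n+1) := one_le_pow₀ (by norm_num)
    have hfn := h n
    have habs1 : |1 + f n| ≤ 3/2 := by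
      calc |1 + f n| ≤ |(1:ℝ)| + |f n| := abs_add_le _ _
        _ ≤ 3/2 := by rw [abs_one]; linarith
    have hmono : (3/2:ℝ)^(n-1) ≤ (3/2:ℝ)^n :=
      pow_le_pow_right₀ (by norm_num) (Nat.sub_le n 1)
    have hpowpos : (0:ℝ) < (3/2:ℝ)^(n-1) := by positivity
    constructor
    · rw [Finset.prod_range_succ]
      have eq1 : (∏ i ∈ Finset.range n, (1 + f i)) * (1 + f n) - 1
          = (∏ i ∈ Finset.range n, (1 + f i) - 1) * (1 + f n) + f n := by ring
      rw [eq1]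
      calc |(∏ i ∈ Finset.range n, (1 + f i) - 1) * (1 + f n) + f n|
          ≤ |∏ i ∈ Finset.range n, (1 + f i) - 1| * |1 + f n| + |f n| := by
            refine (abs_add_le _ _).trans ?_; rw [abs_mul]
        _ ≤ (n * E * (3/2)^n) * (3/2) + E := by
            have h1 : (0:ℝ) ≤ |1 + f n| := abs_nonneg _
            have h2 : |∏ i ∈ Finset.range n, (1 + f i) - 1| * |1 + f n|
                ≤ (n * E * (3/2)^n) * (3/2) :=
              mul_le_mul ih1 habs1 h1 (by positivity)
            linarith
        _ = (n : ℝ) * E * (3/2)^(n+1) + E := by ring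
        _ ≤ ((n:ℕ)+1 : ℕ) * E * (3/2)^(n+1) := by
            push_cast
            nlinarith [mul_le_mul_of_nonneg_left hpown1 hE]
    · rw [Finset.prod_range_succ, Finset.sum_range_succ]
      have eq1 : (∏ i ∈ Finset.range n, (1 + f i)) * (1 + f n) - 1
            - (∑ i ∈ Finset.range n, f i + f n)
          = (∏ i ∈ Finset.range n, (1 + f i) - 1 - ∑ i ∈ Finset.range n, f i)
            + f n * (∏ i ∈ Finset.range n, (1 + f i) - 1) := by ring
      rw [eq1]
      have hb1 : |f n * (∏ i ∈ Finset.range n, (1 + f i) - 1)|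
          ≤ E * (n * E * (3/2)^n) := by
        rw [abs_mul]
        exact mul_le_mul hfn ih1 (abs_nonneg _) hE
      calc |(∏ i ∈ Finset.range n, (1 + f i) - 1 - ∑ i ∈ Finset.range n, f i)
            + f n * (∏ i ∈ Finset.range n, (1 + f i) - 1)|
          ≤ (n : ℝ)^2 * (3/2)^(n-1) * E^2 + E * (n * E * (3/2)^n) :=
            (abs_add_le _ _).trans (by linarith)
        _ ≤ ((n:ℕ)+1:ℕ)^2 * (3/2)^((n+1)-1) * E^2 := by
            rw [show (n+1)-1 = n from rfl]
            push_cast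
            have hX : (0:ℝ) ≤ (3/2)^n * E^2 :=
              mul_nonneg (by positivity) (sq_nonneg E)
            nlinarith [mul_le_mul_of_nonneg_right hmono
                (mul_nonneg (sq_nonneg (n:ℝ)) (sq_nonneg E)),
              mul_nonneg (Nat.cast_nonneg n : (0:ℝ) ≤ n) hX, hX]

theorem stmt_3 (ε : ℕ → ℝ) (hε : ∀ i, |ε i| ≤ 1 / 2) (r ℓ : ℕ) (hℓ : 1 ≤ ℓ) :
    |epsRL ε r ℓ - epsTildeRL ε r ℓ|
      ≤ (ℓ : ℝ) ^ 2 * (3 / 2 : ℝ) ^ ((ℓ : ℤ) - 2) * (⨆ i, |ε i|) ^ 2 := by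
  set E := ⨆ i, |ε i| with hEdef
  have hbdd : BddAbove (Set.range fun i => |ε i|) :=
    ⟨1/2, by rintro x ⟨i, rfl⟩; exact hε i⟩
  have hle : ∀ i, |ε i| ≤ E := fun i => le_ciSup hbdd i
  have hE0 : 0 ≤ E := (abs_nonneg _).trans (hle 0)
  have hE2 : E ≤ 1/2 := ciSup_le hε
  match ℓ, hℓ with
  | 1, _ =>
    have : epsRL ε r 1 - epsTildeRL ε r 1 = 0 := by
      simp [epsRL, epsTildeRL]
    rw [this, abs_zero]
    positivity
  | (k+2), _ =>
    obtain ⟨h1, h2⟩ := aux_bound E hE0 hE2 (fun i => ε (r + i + 1))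
      (fun i => hle _) (k+1)
    set P := ∏ i ∈ Finset.range (k+1), (1 + ε (r + i + 1)) with hP
    set S := ∑ i ∈ Finset.range (k+1), ε (r + i + 1) with hS
    have heq : epsRL ε r (k+2) - epsTildeRL ε r (k+2)
        = (P - 1 - S) - ε (r + (k+2)) * (P - 1) := by
      rw [show epsRL ε r (k+2) = P * (1 - ε (r + (k+2))) - 1 from rfl,
        show epsTildeRL ε r (k+2) = -ε (r + (k+2)) + S from rfl]
      ring
    rw [show (k+1) - 1 = k from rfl] at h2
    push_cast at h1 h2
    have hb : |ε (r + (k+2)) * (P - 1)| ≤ E * (((k:ℝ)+1) * E * (3/2)^(k+1)) := by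
      rw [abs_mul]
      exact mul_le_mul (hle _) h1 (abs_nonneg _) hE0
    have hz : ((k:ℤ)+2) - 2 = ((k:ℕ):ℤ) := by ring
    have hzp : (3/2:ℝ) ^ (((k+2:ℕ):ℤ) - 2) = (3/2:ℝ)^(k:ℕ) := by
      push_cast
      rw [hz, zpow_natCast]
    rw [heq]
    have hstep : |(P - 1 - S) - ε (r + (k+2)) * (P - 1)|
        ≤ ((k:ℝ)+1)^2 * (3/2)^k * E^2 + E * (((k:ℝ)+1) * E * (3/2)^(k+1)) := by
      refine (abs_sub _ _).trans ?_
      linarith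
    refine hstep.trans ?_
    rw [hzp]
    push_cast
    have hp : (0:ℝ) < (3/2:ℝ)^k := by positivity
    have hpe : (3/2:ℝ)^(k+1) = (3/2)^k * (3/2) := by ring
    rw [hpe]
    nlinarith [sq_nonneg E, mul_nonneg (le_of_lt hp) (sq_nonneg E),
      mul_nonneg (mul_nonneg (Nat.cast_nonneg k : (0:ℝ) ≤ k) (le_of_lt hp)) (sq_nonneg E),
      sq_nonneg ((k:ℝ)*E)]
end

section
/- For a sequence ε with |ε|_∞ ≤ 1/2, the linearized operator R̃_ε defined by R̃_ε f(r) = Σ_{ℓ≥1} f(r+ℓ) 2^{-ℓ} ε̃_{r,ℓ}, with ε̃_{r,ℓ} = -ε_{r+ℓ} + Σ_{i=1}^{ℓ-1} ε_{r+i}, satisfies R̃_ε h(r) = -Σ_{ℓ≥1} ε_{r+ℓ} ( h(r+ℓ) 2^{-ℓ} - Σ_{i=ℓ+1}^∞ h(r+i) 2^{-i} ) for every function h of at most linear growth. -/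
/-- The linearized operator `R̃_ε f (r) = ∑_{ℓ≥1} f(r+ℓ) 2^{-ℓ} ε̃_{r,ℓ}` where
`ε̃_{r,ℓ} = -ε_{r+ℓ} + ∑_{i=1}^{ℓ-1} ε_{r+i}`. -/
noncomputable def Rtilde (ε : ℕ → ℝ) (f : ℕ → ℝ) (r : ℕ) : ℝ :=
  ∑' ℓ : ℕ, f (r + ℓ + 1) * (2 : ℝ) ^ (-(ℓ + 1 : ℤ)) *
    (-ε (r + ℓ + 1) + ∑ i ∈ Finset.range ℓ, ε (r + i + 1))

/-- Auxiliary double-indexed summand. -/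
noncomputable def gAux (ε h : ℕ → ℝ) (r ℓ i : ℕ) : ℝ :=
  if i < ℓ then h (r + ℓ + 1) * (2 : ℝ) ^ (-(ℓ + 1 : ℤ)) * ε (r + i + 1) else 0

theorem stmt_5 (ε : ℕ → ℝ) (hε : ∀ i, |ε i| ≤ 1 / 2)
    (h : ℕ → ℝ) (C : ℝ) (hC : ∀ r : ℕ, |h r| ≤ C * (1 + r)) (r : ℕ) :
    Rtilde ε h r =
      -∑' ℓ : ℕ, ε (r + ℓ + 1) *
        (h (r + ℓ + 1) * (2 : ℝ) ^ (-(ℓ + 1 : ℤ))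
          - ∑' k : ℕ, h (r + ℓ + 2 + k) * (2 : ℝ) ^ (-(ℓ + 2 + k : ℤ))) := by
  classical
  have hC0 : 0 ≤ C := by
    have h1 := hC 0
    have h0 := abs_nonneg (h 0)
    push_cast at h1
    linarith
  have hzval : ∀ n : ℕ, (2 : ℝ) ^ (-(n + 1 : ℤ)) = (1/2 : ℝ) ^ (n + 1) := by
    intro n
    rw [show (-(n + 1 : ℤ)) = -((n + 1 : ℕ) : ℤ) by push_cast; ring,
      zpow_neg, zpow_natCast, one_div, inv_pow]
  -- master summable series
  have hnorm : ‖(1/2 : ℝ)‖ < 1 := by rw [Real.norm_eq_abs, abs_of_nonneg (by norm_num : (0:ℝ) ≤ 1/2)]; norm_num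
  have hp2 := summable_pow_mul_geometric_of_norm_lt_one (R := ℝ) 2 hnorm
  have hp1 := summable_pow_mul_geometric_of_norm_lt_one (R := ℝ) 1 hnorm
  have hp0 := summable_pow_mul_geometric_of_norm_lt_one (R := ℝ) 0 hnorm
  have hS2 : Summable fun ℓ : ℕ => ((ℓ : ℝ) + 1) ^ 2 * (1/2 : ℝ) ^ ℓ := by
    refine (hp2.add ((hp1.mul_left 2).add hp0)).congr fun n => ?_
    ring
  -- generic term bound
  have hterm : ∀ (ℓ : ℕ) (w : ℝ), |w| ≤ (ℓ : ℝ) + 1 →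
      |h (r + ℓ + 1) * (2 : ℝ) ^ (-(ℓ + 1 : ℤ)) * w| ≤
        (C * ((r : ℝ) + 2)) * (((ℓ : ℝ) + 1) ^ 2 * (1/2 : ℝ) ^ ℓ) := by
    intro ℓ w hw
    have hh : |h (r + ℓ + 1)| ≤ C * ((r : ℝ) + (ℓ : ℝ) + 2) := by
      have := hC (r + ℓ + 1)
      push_cast at this
      linarith
    have hl0 : (0 : ℝ) ≤ (ℓ : ℝ) := Nat.cast_nonneg ℓ
    have hr0 : (0 : ℝ) ≤ (r : ℝ) := Nat.cast_nonneg r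
    have hp : (0 : ℝ) < (1/2 : ℝ) ^ ℓ := by positivity
    rw [abs_mul, abs_mul, hzval ℓ, abs_of_pos (by positivity : (0:ℝ) < (1/2:ℝ) ^ (ℓ+1))]
    have key : ((r : ℝ) + (ℓ : ℝ) + 2) * (((ℓ : ℝ) + 1) * (1/2)) ≤
        ((r : ℝ) + 2) * ((ℓ : ℝ) + 1) ^ 2 := by nlinarith [mul_nonneg hr0 hl0]
    calc |h (r + ℓ + 1)| * (1/2 : ℝ) ^ (ℓ + 1) * |w|
        = |h (r + ℓ + 1)| * |w| * (1/2 : ℝ) ^ (ℓ + 1) := by ring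
      _ ≤ (C * ((r : ℝ) + (ℓ : ℝ) + 2)) * (((ℓ : ℝ) + 1)) * (1/2 : ℝ) ^ (ℓ + 1) := by
          have h1 : |h (r + ℓ + 1)| * |w| ≤ (C * ((r : ℝ) + (ℓ : ℝ) + 2)) * ((ℓ : ℝ) + 1) :=
            mul_le_mul hh hw (abs_nonneg w) (by positivity)
          exact mul_le_mul_of_nonneg_right h1 (by positivity)
      _ = (C * (1/2 : ℝ) ^ ℓ) * (((r : ℝ) + (ℓ : ℝ) + 2) * (((ℓ : ℝ) + 1) * (1/2))) := by
          rw [pow_succ]; ring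
      _ ≤ (C * (1/2 : ℝ) ^ ℓ) * (((r : ℝ) + 2) * ((ℓ : ℝ) + 1) ^ 2) :=
          mul_le_mul_of_nonneg_left key (by positivity)
      _ = (C * ((r : ℝ) + 2)) * (((ℓ : ℝ) + 1) ^ 2 * (1/2 : ℝ) ^ ℓ) := by ring
  -- domination criterion
  have hdom : ∀ f : ℕ → ℝ,
      (∀ ℓ, |f ℓ| ≤ (C * ((r : ℝ) + 2)) * (((ℓ : ℝ) + 1) ^ 2 * (1/2 : ℝ) ^ ℓ)) → Summable f :=
    fun f hf => summable_abs_iff.mp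
      (Summable.of_nonneg_of_le (fun _ => abs_nonneg _) hf (hS2.mul_left _))
  -- summability of the two pieces
  have hA : Summable (fun ℓ : ℕ =>
      h (r + ℓ + 1) * (2 : ℝ) ^ (-(ℓ + 1 : ℤ)) * (-ε (r + ℓ + 1))) := by
    refine hdom _ fun ℓ => hterm ℓ _ ?_
    rw [abs_neg]
    have := hε (r + ℓ + 1)
    have hl0 : (0 : ℝ) ≤ (ℓ : ℝ) := Nat.cast_nonneg ℓ
    linarith
  have hwB : ∀ ℓ : ℕ, |∑ i ∈ Finset.range ℓ, ε (r + i + 1)| ≤ (ℓ : ℝ) + 1 := by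
    intro ℓ
    have hl0 : (0 : ℝ) ≤ (ℓ : ℝ) := Nat.cast_nonneg ℓ
    calc |∑ i ∈ Finset.range ℓ, ε (r + i + 1)|
        ≤ ∑ i ∈ Finset.range ℓ, |ε (r + i + 1)| := Finset.abs_sum_le_sum_abs _ _
      _ ≤ ∑ _i ∈ Finset.range ℓ, (1/2 : ℝ) := Finset.sum_le_sum fun i _ => hε _
      _ = (ℓ : ℝ) * (1/2) := by
          rw [Finset.sum_const, Finset.card_range, nsmul_eq_mul]
      _ ≤ (ℓ : ℝ) + 1 := by linarith
  have hB : Summable (fun ℓ : ℕ =>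
      h (r + ℓ + 1) * (2 : ℝ) ^ (-(ℓ + 1 : ℤ)) * (∑ i ∈ Finset.range ℓ, ε (r + i + 1))) :=
    hdom _ fun ℓ => hterm ℓ _ (hwB ℓ)
  -- summability of the double sum
  have hgzero : ∀ ℓ : ℕ, ∀ i ∉ Finset.range ℓ, gAux ε h r ℓ i = 0 := by
    intro ℓ i hi
    rw [Finset.mem_range, not_lt] at hi
    exact if_neg (by omega)
  have hGsum : Summable (Function.uncurry (gAux ε h r)) := by
    rw [← summable_abs_iff]
    apply (summable_prod_of_nonneg (fun p => abs_nonneg _)).mpr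
    constructor
    · intro ℓ
      apply summable_of_ne_finset_zero (s := Finset.range ℓ)
      intro i hi
      rw [Function.uncurry, hgzero ℓ i hi, abs_zero]
    · refine hdom _ fun ℓ => ?_
      rw [abs_of_nonneg (tsum_nonneg fun i => abs_nonneg _)]
      have hrow : (∑' i, |Function.uncurry (gAux ε h r) (ℓ, i)|) =
          ∑ i ∈ Finset.range ℓ, |gAux ε h r ℓ i| :=
        tsum_eq_sum (fun i hi => by rw [Function.uncurry, hgzero ℓ i hi, abs_zero])
      rw [hrow]
      have hl0 : (0 : ℝ) ≤ (ℓ : ℝ) := Nat.cast_nonneg ℓ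
      calc ∑ i ∈ Finset.range ℓ, |gAux ε h r ℓ i|
          ≤ ∑ _i ∈ Finset.range ℓ,
              |h (r + ℓ + 1) * (2 : ℝ) ^ (-(ℓ + 1 : ℤ))| * (1/2) := by
            refine Finset.sum_le_sum fun i hi => ?_
            rw [Finset.mem_range] at hi
            rw [gAux, if_pos hi, abs_mul]
            exact mul_le_mul_of_nonneg_left (hε _) (abs_nonneg _)
        _ = (ℓ : ℝ) * (|h (r + ℓ + 1) * (2 : ℝ) ^ (-(ℓ + 1 : ℤ))| * (1/2)) := by
            rw [Finset.sum_const, Finset.card_range, nsmul_eq_mul]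
        _ = |h (r + ℓ + 1) * (2 : ℝ) ^ (-(ℓ + 1 : ℤ)) * ((ℓ : ℝ) / 2)| := by
            rw [abs_mul (h (r + ℓ + 1) * (2 : ℝ) ^ (-(ℓ + 1 : ℤ))) ((ℓ : ℝ) / 2),
              abs_of_nonneg (by positivity : (0:ℝ) ≤ (ℓ : ℝ) / 2)]
            ring
        _ ≤ (C * ((r : ℝ) + 2)) * (((ℓ : ℝ) + 1) ^ 2 * (1/2 : ℝ) ^ ℓ) := by
            refine hterm ℓ _ ?_
            rw [abs_of_nonneg (by positivity : (0:ℝ) ≤ (ℓ : ℝ) / 2)]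
            linarith
  -- identify B with the row sums of g
  have hBg : ∀ ℓ : ℕ,
      h (r + ℓ + 1) * (2 : ℝ) ^ (-(ℓ + 1 : ℤ)) * (∑ i ∈ Finset.range ℓ, ε (r + i + 1)) =
        ∑' i, gAux ε h r ℓ i := by
    intro ℓ
    rw [tsum_eq_sum (hgzero ℓ), Finset.mul_sum]
    exact Finset.sum_congr rfl fun i hi => (if_pos (Finset.mem_range.mp hi)).symm
  -- column sums of g
  have hinner : ∀ i : ℕ, (∑' ℓ, gAux ε h r ℓ i) =
      ε (r + i + 1) * ∑' k, h (r + i + 2 + k) * (2 : ℝ) ^ (-(i + 2 + k : ℤ)) := by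
    intro i
    have hcol : Summable fun ℓ => gAux ε h r ℓ i := by
      have := hGsum.prod_symm.prod_factor i
      exact this.congr fun ℓ => rfl
    have hshift := Summable.sum_add_tsum_nat_add (f := fun ℓ => gAux ε h r ℓ i) (i + 1) hcol
    have hz0 : (∑ ℓ ∈ Finset.range (i + 1), gAux ε h r ℓ i) = 0 :=
      Finset.sum_eq_zero fun ℓ hℓ => by
        rw [Finset.mem_range] at hℓ
        exact if_neg (by omega)
    rw [← hshift, hz0, zero_add]
    have hterm' : ∀ k : ℕ, gAux ε h r (k + (i + 1)) i =
        ε (r + i + 1) * (h (r + i + 2 + k) * (2 : ℝ) ^ (-(i + 2 + k : ℤ))) := by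
      intro k
      rw [gAux, if_pos (by omega : i < k + (i + 1))]
      rw [show r + (k + (i + 1)) + 1 = r + i + 2 + k by omega]
      rw [show (-(((k + (i + 1) : ℕ) : ℤ) + 1)) = (-((i : ℤ) + 2 + (k : ℤ))) by push_cast; ring]
      ring
    rw [tsum_congr hterm', tsum_mul_left]
  -- summability of the ε·S terms
  have hεS : Summable (fun i : ℕ =>
      ε (r + i + 1) * ∑' k, h (r + i + 2 + k) * (2 : ℝ) ^ (-(i + 2 + k : ℤ))) := by
    refine (hGsum.prod_symm.prod).congr fun i => ?_
    exact (tsum_congr fun ℓ => rfl).trans (hinner i)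
  -- main computation
  rw [Rtilde]
  have step1 : (∑' ℓ : ℕ, h (r + ℓ + 1) * (2 : ℝ) ^ (-(ℓ + 1 : ℤ)) *
        (-ε (r + ℓ + 1) + ∑ i ∈ Finset.range ℓ, ε (r + i + 1))) =
      (∑' ℓ : ℕ, h (r + ℓ + 1) * (2 : ℝ) ^ (-(ℓ + 1 : ℤ)) * (-ε (r + ℓ + 1))) +
        ∑' ℓ : ℕ, h (r + ℓ + 1) * (2 : ℝ) ^ (-(ℓ + 1 : ℤ)) *
          (∑ i ∈ Finset.range ℓ, ε (r + i + 1)) := by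
    rw [← Summable.tsum_add hA hB]
    exact tsum_congr fun ℓ => by ring
  rw [step1]
  have step2 : (∑' ℓ : ℕ, h (r + ℓ + 1) * (2 : ℝ) ^ (-(ℓ + 1 : ℤ)) *
        (∑ i ∈ Finset.range ℓ, ε (r + i + 1))) =
      ∑' i : ℕ, ε (r + i + 1) * ∑' k, h (r + i + 2 + k) * (2 : ℝ) ^ (-(i + 2 + k : ℤ)) := by
    calc (∑' ℓ : ℕ, h (r + ℓ + 1) * (2 : ℝ) ^ (-(ℓ + 1 : ℤ)) *
          (∑ i ∈ Finset.range ℓ, ε (r + i + 1)))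
        = ∑' ℓ, ∑' i, gAux ε h r ℓ i := tsum_congr hBg
      _ = ∑' i, ∑' ℓ, gAux ε h r ℓ i := (Summable.tsum_comm hGsum).symm
      _ = _ := tsum_congr hinner
  rw [step2, ← tsum_neg, ← Summable.tsum_add hA hεS]
  exact tsum_congr fun i => by ring
end

section
/- Let h(r)=f(r)+r g(r) with f, g Lipschitz and bounded g. If |ε|_∞ ≤ 1/2 then the linearized operator satisfies R̃_ε h(r) = f_ε(r) + r g_ε(r) where |f_ε|_∞ ≤ C(Lip(f)+|g|_∞)|ε|_∞ and |g_ε|_∞ ≤ C Lip(g)|ε|_∞ for a universal constant C. -/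
open Finset Filter Topology

noncomputable def linCoeff (ε : ℕ → ℝ) (r ℓ : ℕ) : ℝ :=
  (2 : ℝ) ^ (-(ℓ + 1 : ℤ)) * (-ε (r + ℓ + 1) + ∑ i ∈ range ℓ, ε (r + i + 1))

noncomputable def linCoeffWeight (ℓ : ℕ) : ℝ :=
  ((ℓ : ℝ) + 1) ^ 2 * 2⁻¹ ^ (ℓ + 1)

/- The paper's `f_ε` and `g_ε`, written as series in `ℓ`; regrouping them by the index of `ε`
gives the formulas of the paper. -/
noncomputable def fEps (ε f g : ℕ → ℝ) (r : ℕ) : ℝ :=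
  ∑' ℓ, (f (r + ℓ + 1) - f r + (ℓ + 1) * g (r + ℓ + 1)) * linCoeff ε r ℓ

noncomputable def gEps (ε g : ℕ → ℝ) (r : ℕ) : ℝ :=
  ∑' ℓ, (g (r + ℓ + 1) - g r) * linCoeff ε r ℓ

lemma Rtilde_eq_tsum_mul_linCoeff (ε h : ℕ → ℝ) (r : ℕ) :
    Rtilde ε h r = ∑' ℓ, h (r + ℓ + 1) * linCoeff ε r ℓ :=
  tsum_congr fun _ => mul_assoc _ _ _

lemma two_zpow_neg_succ (ℓ : ℕ) : (2 : ℝ) ^ (-(ℓ + 1 : ℤ)) = 2⁻¹ ^ (ℓ + 1) := by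
  rw [zpow_neg, inv_pow]
  norm_cast

lemma summable_linCoeffWeight : Summable linCoeffWeight := by
  have h := summable_pow_mul_geometric_of_norm_lt_one 2 (r := (2⁻¹ : ℝ)) (by norm_num)
  exact ((summable_nat_add_iff 1).2 h).congr fun n => by rw [linCoeffWeight]; push_cast; rfl

lemma tsum_linCoeffWeight_pos : 0 < ∑' ℓ, linCoeffWeight ℓ :=
  summable_linCoeffWeight.tsum_pos (fun _ => by unfold linCoeffWeight; positivity) 0
    (by norm_num [linCoeffWeight])

lemma sum_range_linCoeff (ε : ℕ → ℝ) (r N : ℕ) :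
    ∑ ℓ ∈ range N, linCoeff ε r ℓ = -(2⁻¹ ^ N * ∑ i ∈ range N, ε (r + i + 1)) := by
  induction N with
  | zero => simp
  | succ N ih =>
    rw [sum_range_succ, ih, linCoeff, two_zpow_neg_succ, sum_range_succ _ N]
    ring

lemma abs_shift_sub_le_of_lipschitz {f : ℕ → ℝ} {K : ℝ}
    (hf : ∀ r r' : ℕ, |f r - f r'| ≤ K * |(r : ℝ) - r'|) (r ℓ : ℕ) :
    |f (r + ℓ + 1) - f r| ≤ K * (ℓ + 1) := by
  have hdist : |((r + ℓ + 1 : ℕ) : ℝ) - r| = ℓ + 1 := by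
    push_cast
    rw [add_assoc, add_sub_cancel_left, abs_of_nonneg (by positivity)]
  simpa only [hdist] using hf (r + ℓ + 1) r

lemma abs_shift_sub_add_mul_le {f g : ℕ → ℝ} {Kf Mg : ℝ}
    (hf : ∀ r r' : ℕ, |f r - f r'| ≤ Kf * |(r : ℝ) - r'|) (hg : ∀ r : ℕ, |g r| ≤ Mg) (r ℓ : ℕ) :
    |f (r + ℓ + 1) - f r + (ℓ + 1) * g (r + ℓ + 1)| ≤ (Kf + Mg) * (ℓ + 1) :=
  calc _ ≤ |f (r + ℓ + 1) - f r| + (ℓ + 1) * |g (r + ℓ + 1)| :=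
        (abs_add_le _ _).trans_eq (by rw [abs_mul, abs_of_nonneg (by positivity : (0 : ℝ) ≤ ℓ + 1)])
    _ ≤ Kf * (ℓ + 1) + (ℓ + 1) * Mg := by
        gcongr
        exacts [abs_shift_sub_le_of_lipschitz hf r ℓ, hg _]
    _ = (Kf + Mg) * (ℓ + 1) := by ring

section Bounds

variable {ε : ℕ → ℝ} {E : ℝ}

lemma abs_linCoeff_le (hE : ∀ j, |ε j| ≤ E) (r ℓ : ℕ) :
    |linCoeff ε r ℓ| ≤ E * ((ℓ + 1) * 2⁻¹ ^ (ℓ + 1)) := by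
  have hsum : |-ε (r + ℓ + 1) + ∑ i ∈ range ℓ, ε (r + i + 1)| ≤ (ℓ + 1) * E :=
    calc _ ≤ |ε (r + ℓ + 1)| + ∑ i ∈ range ℓ, |ε (r + i + 1)| := by
          rw [← abs_neg (ε _)]
          exact (abs_add_le _ _).trans (by gcongr; exact abs_sum_le_sum_abs _ _)
      _ ≤ E + ∑ i ∈ range ℓ, E := by gcongr <;> apply hE
      _ = (ℓ + 1) * E := by rw [sum_const, card_range, nsmul_eq_mul]; ring
  rw [linCoeff, two_zpow_neg_succ, abs_mul, abs_of_pos (by positivity)]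
  calc _ ≤ 2⁻¹ ^ (ℓ + 1) * ((ℓ + 1) * E) := by gcongr
    _ = _ := by ring

lemma abs_mul_linCoeff_le (hE : ∀ j, |ε j| ≤ E) {u c : ℝ} {ℓ : ℕ} (hu : |u| ≤ c * (ℓ + 1))
    (r : ℕ) : |u * linCoeff ε r ℓ| ≤ c * E * linCoeffWeight ℓ := by
  rw [abs_mul]
  calc _ ≤ c * (ℓ + 1) * (E * ((ℓ + 1) * 2⁻¹ ^ (ℓ + 1))) :=
        mul_le_mul hu (abs_linCoeff_le hE r ℓ) (abs_nonneg _) ((abs_nonneg _).trans hu)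
    _ = c * E * linCoeffWeight ℓ := by rw [linCoeffWeight]; ring

variable {u : ℕ → ℝ} {c : ℝ}

lemma summable_mul_linCoeff (hE : ∀ j, |ε j| ≤ E) (hu : ∀ ℓ, |u ℓ| ≤ c * (ℓ + 1)) (r : ℕ) :
    Summable fun ℓ => u ℓ * linCoeff ε r ℓ :=
  (summable_linCoeffWeight.mul_left (c * E)).of_norm_bounded
    fun ℓ => abs_mul_linCoeff_le hE (hu ℓ) r

lemma abs_tsum_mul_linCoeff_le (hE : ∀ j, |ε j| ≤ E) (hu : ∀ ℓ, |u ℓ| ≤ c * (ℓ + 1)) (r : ℕ) :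
    |∑' ℓ, u ℓ * linCoeff ε r ℓ| ≤ (∑' ℓ, linCoeffWeight ℓ) * c * E :=
  calc |∑' ℓ, u ℓ * linCoeff ε r ℓ| ≤ c * E * ∑' ℓ, linCoeffWeight ℓ :=
        tsum_of_norm_bounded (f := fun ℓ => u ℓ * linCoeff ε r ℓ)
          (summable_linCoeffWeight.hasSum.mul_left (c * E)) fun ℓ => abs_mul_linCoeff_le hE (hu ℓ) r
    _ = (∑' ℓ, linCoeffWeight ℓ) * c * E := by ring

lemma summable_linCoeff (hE : ∀ j, |ε j| ≤ E) (r : ℕ) : Summable (linCoeff ε r) := by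
  simpa using summable_mul_linCoeff (u := fun _ => 1) (c := 1) hE
    (fun ℓ => by rw [abs_one, one_mul]; exact le_add_of_nonneg_left ℓ.cast_nonneg) r

lemma tsum_linCoeff_eq_zero (hE : ∀ j, |ε j| ≤ E) (r : ℕ) : ∑' ℓ, linCoeff ε r ℓ = 0 := by
  have hpartial : Tendsto (fun N => ∑ ℓ ∈ range N, linCoeff ε r ℓ) atTop (𝓝 0) := by
    have hmaj : Tendsto (fun N : ℕ => E * (N * 2⁻¹ ^ N)) atTop (𝓝 0) := by
      simpa using (tendsto_self_mul_const_pow_of_abs_lt_one (r := 2⁻¹) (by norm_num)).const_mul E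
    refine squeeze_zero_norm (fun N => ?_) hmaj
    rw [sum_range_linCoeff, norm_neg, Real.norm_eq_abs, abs_mul, abs_of_pos (by positivity)]
    calc _ ≤ 2⁻¹ ^ N * ∑ i ∈ range N, |ε (r + i + 1)| := by gcongr; exact abs_sum_le_sum_abs _ _
      _ ≤ 2⁻¹ ^ N * ∑ i ∈ range N, E := by gcongr; apply hE
      _ = E * (N * 2⁻¹ ^ N) := by rw [sum_const, card_range, nsmul_eq_mul]; ring
  exact tendsto_nhds_unique (summable_linCoeff hE r).hasSum.tendsto_sum_nat hpartial

end Bounds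

lemma Rtilde_affine_eq {ε f g : ℕ → ℝ} {E cf cg : ℝ} (hE : ∀ j, |ε j| ≤ E) (r : ℕ)
    (hfu : ∀ ℓ : ℕ, |f (r + ℓ + 1) - f r + (ℓ + 1) * g (r + ℓ + 1)| ≤ cf * (ℓ + 1))
    (hgu : ∀ ℓ : ℕ, |g (r + ℓ + 1) - g r| ≤ cg * (ℓ + 1)) :
    Rtilde ε (fun r => f r + r * g r) r = fEps ε f g r + r * gEps ε g r := by
  have hsf := summable_mul_linCoeff hE hfu r
  have hsg := (summable_mul_linCoeff hE hgu r).mul_left (r : ℝ)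
  have hsplit : ∀ ℓ : ℕ, (f (r + ℓ + 1) + ((r + ℓ + 1 : ℕ) : ℝ) * g (r + ℓ + 1)) * linCoeff ε r ℓ
      = (f (r + ℓ + 1) - f r + (ℓ + 1) * g (r + ℓ + 1)) * linCoeff ε r ℓ
        + r * ((g (r + ℓ + 1) - g r) * linCoeff ε r ℓ) + (f r + r * g r) * linCoeff ε r ℓ := by
    intro ℓ
    push_cast
    ring
  rw [Rtilde_eq_tsum_mul_linCoeff, tsum_congr hsplit,
    (hsf.add hsg).tsum_add ((summable_linCoeff hE r).mul_left _), hsf.tsum_add hsg,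
    tsum_mul_left, tsum_mul_left, tsum_linCoeff_eq_zero hE, mul_zero, add_zero, fEps, gEps]

theorem stmt_14 :
    ∃ C : ℝ, 0 < C ∧
      ∀ ε : ℕ → ℝ, (∀ i, |ε i| ≤ 1 / 2) →
        ∀ f g : ℕ → ℝ, ∀ Kf Kg Mg : ℝ, 0 ≤ Kf → 0 ≤ Kg → 0 ≤ Mg →
          (∀ r r' : ℕ, |f r - f r'| ≤ Kf * |(r : ℝ) - r'|) →
          (∀ r r' : ℕ, |g r - g r'| ≤ Kg * |(r : ℝ) - r'|) →
          (∀ r : ℕ, |g r| ≤ Mg) →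
          ∃ fε gε : ℕ → ℝ,
            (∀ r : ℕ, Rtilde ε (fun r => f r + r * g r) r = fε r + r * gε r) ∧
            (∀ r : ℕ, |fε r| ≤ C * (Kf + Mg) * (⨆ j, |ε j|)) ∧
            (∀ r : ℕ, |gε r| ≤ C * Kg * (⨆ j, |ε j|)) := by
  refine ⟨∑' ℓ, linCoeffWeight ℓ, tsum_linCoeffWeight_pos, ?_⟩
  intro ε hε f g Kf Kg Mg _ _ _ hf hg hgM
  have hE : ∀ j, |ε j| ≤ ⨆ j, |ε j| := le_ciSup ⟨1 / 2, Set.forall_mem_range.2 hε⟩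
  have hfu := abs_shift_sub_add_mul_le hf hgM
  have hgu := abs_shift_sub_le_of_lipschitz hg
  exact ⟨fEps ε f g, gEps ε g, fun r => Rtilde_affine_eq hE r (hfu r) (hgu r),
    fun r => abs_tsum_mul_linCoeff_le hE (hfu r) r, fun r => abs_tsum_mul_linCoeff_le hE (hgu r) r⟩
end
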